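/- arXiv:1807.03344 — 4 statements merged into one kernel-verified Lean document; each statement's English description precedes it below -/
import Mathlib

section
/- With γ, τ, n, N > 0 and g(U) = (1/(2γ))(−U(τ+2γ) + √(U²(τ²+4γτ) + 4UnNγ²)), one has g'(nN) = −γ/(τ+2γ) and lim_{U→0⁺} g'(U) = +∞; hence g' has a unique root in (0, nN). -/
/-!
Write `g U = (-c U + √(Q U)) / (2γ)` with `c = τ + 2γ` and `Q U = a U² + b U`, where
`a = τ² + 4γτ` and `b = 4nNγ²`. Then `g' = (-c + Q' / (2√Q)) / (2γ)`. Since `Q(0) = 0` and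
`Q'(0) = b > 0`, the quotient `Q' / (2√Q)` blows up at `0⁺`. The identity `Q'² = 4aQ + b²` shows
that `Q' / (2√Q) = c` exactly when `Q = b² / (4(c² - a)) = (nNγ)²`, and because
`Q(nN) = (nNc)²` and `Q` is strictly increasing on `[0, ∞)`, this happens for exactly one
`U ∈ (0, nN)`.
-/

open Filter Set Topology

section Quadratic

variable {a b : ℝ}

lemma strictMonoOn_quadratic (ha : 0 ≤ a) (hb : 0 < b) :
    StrictMonoOn (fun x => a * x ^ 2 + b * x) (Ici 0) := by
  intro x hx y hy hxy
  simp only [mem_Ici] at hx hy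
  nlinarith [mul_le_mul_of_nonneg_left (mul_le_mul hxy.le hxy.le hx hy) ha]

lemma existsUnique_mem_Ioo_quadratic_eq (ha : 0 ≤ a) (hb : 0 < b) {T y : ℝ} (hT : 0 < T)
    (hy : 0 < y) (hyT : y < a * T ^ 2 + b * T) :
    ∃! x, x ∈ Ioo 0 T ∧ a * x ^ 2 + b * x = y := by
  obtain ⟨x, hx, hxy⟩ := intermediate_value_Ioo hT.le
    (by fun_prop : Continuous fun x => a * x ^ 2 + b * x).continuousOn
    (show y ∈ Ioo (a * 0 ^ 2 + b * 0) _ by simpa using ⟨hy, hyT⟩)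
  refine ⟨x, ⟨hx, hxy⟩, fun x' ⟨hx', hx'y⟩ => ?_⟩
  exact (strictMonoOn_quadratic ha hb).injOn hx'.1.le hx.1.le (hx'y.trans hxy.symm)

noncomputable def sqrtQuadraticDeriv (a b x : ℝ) : ℝ :=
  (2 * a * x + b) / (2 * √(a * x ^ 2 + b * x))

lemma hasDerivAt_sqrt_quadratic {x : ℝ} (hx : 0 < a * x ^ 2 + b * x) :
    HasDerivAt (fun x => √(a * x ^ 2 + b * x)) (sqrtQuadraticDeriv a b x) x := by
  have hQ : HasDerivAt (fun x => a * x ^ 2 + b * x) (2 * a * x + b) x :=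
    (((hasDerivAt_pow 2 x).const_mul a).add ((hasDerivAt_id' x).const_mul b)).congr_deriv
      (by ring)
  exact hQ.sqrt hx.ne'

lemma hasDerivAt_mul_neg_mul_add_sqrt_quadratic (k c : ℝ) {x : ℝ}
    (hx : 0 < a * x ^ 2 + b * x) :
    HasDerivAt (fun x => k * (-(x * c) + √(a * x ^ 2 + b * x)))
      (k * (-c + sqrtQuadraticDeriv a b x)) x :=
  (((hasDerivAt_id' x).mul_const c).neg.add (hasDerivAt_sqrt_quadratic hx)).const_mul k
    |>.congr_deriv (by ring)

lemma sqrtQuadraticDeriv_eq_iff (ha : 0 ≤ a) (hb : 0 < b) {c x : ℝ} (hc : 0 < c)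
    (hac : a < c ^ 2) (hx : 0 < x) :
    sqrtQuadraticDeriv a b x = c ↔ a * x ^ 2 + b * x = b ^ 2 / (4 * (c ^ 2 - a)) := by
  have hQ : 0 < a * x ^ 2 + b * x := by positivity
  have hsq := Real.sq_sqrt hQ.le
  have : 0 < √(a * x ^ 2 + b * x) := Real.sqrt_pos.mpr hQ
  rw [sqrtQuadraticDeriv, div_eq_iff (by positivity), eq_div_iff (by nlinarith)]
  -- both directions rest on `(2ax + b)² = 4a(ax² + bx) + b²`
  constructor
  · intro h
    linear_combination
      (-(2 * a * x + b + c * (2 * √(a * x ^ 2 + b * x)))) * h - 4 * c ^ 2 * hsq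
  · intro h
    refine (pow_left_inj₀ (by positivity) (by positivity) two_ne_zero).mp ?_
    linear_combination (-1) * h - 4 * c ^ 2 * hsq

lemma tendsto_sqrtQuadraticDeriv_atTop (ha : 0 ≤ a) (hb : 0 < b) :
    Tendsto (sqrtQuadraticDeriv a b) (𝓝[>] 0) atTop := by
  have hnum : Tendsto (fun x => 2 * a * x + b) (𝓝[>] 0) (𝓝 b) := by
    simpa using ((by fun_prop : Continuous fun x : ℝ => 2 * a * x + b).tendsto 0).mono_left
      nhdsWithin_le_nhds
  have hden : Tendsto (fun x => 2 * √(a * x ^ 2 + b * x)) (𝓝[>] 0) (𝓝[>] 0) := by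
    refine tendsto_nhdsWithin_of_tendsto_nhds_of_eventually_within _ ?_ ?_
    · simpa using ((by fun_prop : Continuous fun x : ℝ => 2 * √(a * x ^ 2 + b * x)).tendsto
        0).mono_left nhdsWithin_le_nhds
    · filter_upwards [self_mem_nhdsWithin] with x hx
      have : 0 < a * x ^ 2 + b * x := by have := mem_Ioi.mp hx; positivity
      exact mem_Ioi.mpr (by positivity)
  exact (hnum.pos_mul_atTop hb hden.inv_tendsto_nhdsGT_zero).congr fun x => by
    simp [sqrtQuadraticDeriv, div_eq_mul_inv]

end Quadratic

theorem g_deriv_properties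
    (γ τ n N : ℝ) (hγ : 0 < γ) (hτ : 0 < τ) (hn : 0 < n) (hN : 0 < N)
    (g : ℝ → ℝ)
    (hg : ∀ U, g U = (1 / (2 * γ)) *
      (-(U * (τ + 2 * γ)) + Real.sqrt (U ^ 2 * (τ ^ 2 + 4 * γ * τ) + 4 * U * n * N * γ ^ 2))) :
    deriv g (n * N) = -γ / (τ + 2 * γ) ∧
    Filter.Tendsto (deriv g) (nhdsWithin 0 (Set.Ioi 0)) Filter.atTop ∧
    (∃! U : ℝ, U ∈ Set.Ioo 0 (n * N) ∧ deriv g U = 0) := by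
  set a := τ ^ 2 + 4 * γ * τ
  set b := 4 * n * N * γ ^ 2
  set c := τ + 2 * γ
  have ha : 0 ≤ a := by positivity
  have hb : 0 < b := by positivity
  have hnN : 0 < n * N := by positivity
  have hg' : g = fun U => 1 / (2 * γ) * (-(U * c) + √(a * U ^ 2 + b * U)) := by
    funext U
    rw [hg, show U ^ 2 * a + 4 * U * n * N * γ ^ 2 = a * U ^ 2 + b * U by ring]
  have hderiv (U : ℝ) (hU : 0 < U) :
      deriv g U = 1 / (2 * γ) * (-c + sqrtQuadraticDeriv a b U) := by
    rw [hg']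
    exact (hasDerivAt_mul_neg_mul_add_sqrt_quadratic _ _ (by positivity)).deriv
  refine ⟨?_, ?_, ?_⟩
  · have hQ : a * (n * N) ^ 2 + b * (n * N) = (n * N * c) ^ 2 := by ring
    rw [hderiv _ hnN, sqrtQuadraticDeriv, hQ, Real.sqrt_sq (by positivity)]
    field_simp
    ring
  · refine ((tendsto_atTop_add_const_left _ (-c) (tendsto_sqrtQuadraticDeriv_atTop ha hb)
      ).const_mul_atTop (by positivity : 0 < 1 / (2 * γ))).congr' ?_
    filter_upwards [self_mem_nhdsWithin] with U hU
    exact (hderiv U hU).symm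
  · have hy : b ^ 2 / (4 * (c ^ 2 - a)) = (n * N * γ) ^ 2 := by
      rw [show c ^ 2 - a = 4 * γ ^ 2 by ring]
      field_simp
      ring
    have root_iff (U : ℝ) (hU : U ∈ Ioo 0 (n * N)) :
        deriv g U = 0 ↔ a * U ^ 2 + b * U = (n * N * γ) ^ 2 := by
      rw [← hy, ← sqrtQuadraticDeriv_eq_iff ha hb (by positivity) (by nlinarith) hU.1,
        hderiv U hU.1, mul_eq_zero, neg_add_eq_zero, or_iff_right (by positivity), eq_comm]
    exact (existsUnique_congr fun U => and_congr_right (root_iff U)).mpr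
      (existsUnique_mem_Ioo_quadratic_eq ha hb hnN (by positivity) (by nlinarith))
end

section
/- Suppose γ, τ, n, N > 0 and the network data satisfy τ > τ_c = γn/(⟨n²⟩−n). Define g as the nonnegative root of γnNU = γZ² + ZU(τ+2γ) + γU², and f(U) = (τU/(U+g(U))²) Σ_l n_l(n_l−1)N_l/(γ + τn_l · g(U)/(U+g(U))). Then f is continuous and strictly increasing on (0, nN), lim_{U→0⁺} f(U) < 1, f(nN) > 1, and hence there exists a unique U* ∈ (0, nN) with f(U*) = 1. -/
/-!
Write `x = Z / (U + Z)` for the nonnegative root `Z = g U`. The quadratic for `Z` becomes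
`U = γ n N (1 - x)² / (γ + τ x (1 - x))`, a strictly decreasing function of `x ∈ [0, 1]`, so `x`
decreases strictly from `1` (as `U → 0⁺`) to `0` (at `U = n N`). In this variable
`f U = τ / (γ n N) * Σ_l c_l (γ + τ x (1 - x)) / (γ + τ n_l x)` with `c_l = n_l (n_l - 1) N_l`, and
every term is strictly decreasing in `x ≥ 0` once `n_l ≥ 1`; hence `f` is strictly increasing. At
`x = 0` it equals `τ (⟨n²⟩ - n) / (γ n) = τ / τ_c > 1`; at `x = 1` each term is at most
`γ (n_l - 1) N_l / τ`, so the limit at `0⁺` is at most `1 - N / (n N) < 1`. The intermediate value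
theorem gives the root, and monotonicity its uniqueness.
-/

open Filter Topology Set

lemma existsUnique_eq_of_strictMonoOn_Ioc {f : ℝ → ℝ} {a b c y : ℝ} (hab : a < b)
    (hcont : ContinuousOn f (Ioc a b)) (hmono : StrictMonoOn f (Ioc a b))
    (hlim : Tendsto f (𝓝[>] a) (𝓝 c)) (hcy : c < y) (hyb : y < f b) :
    ∃! x, x ∈ Ioo a b ∧ f x = y := by
  obtain ⟨x₀, hx₀y, hx₀⟩ :=
    ((hlim.eventually_lt_const hcy).and (Ioo_mem_nhdsGT hab)).exists
  have hsub : Icc x₀ b ⊆ Ioc a b := Icc_subset_Ioc hx₀.1 le_rfl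
  obtain ⟨x, hx, hfx⟩ :=
    intermediate_value_Icc hx₀.2.le (hcont.mono hsub) ⟨hx₀y.le, hyb.le⟩
  have hxb : x ≠ b := by rintro rfl; exact hyb.ne' hfx
  refine ⟨x, ⟨⟨hx₀.1.trans_le hx.1, lt_of_le_of_ne hx.2 hxb⟩, hfx⟩, fun x' hx' ↦ ?_⟩
  exact hmono.injOn (Ioo_subset_Ioc_self hx'.1) (hsub hx) (hx'.2.trans hfx.symm)

namespace CompactPairwiseSIS

noncomputable section

variable {γ τ C U : ℝ}

def pairRoot (γ τ C U : ℝ) : ℝ :=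
  (√((U * (τ + 2 * γ)) ^ 2 + 4 * γ ^ 2 * (C * U - U ^ 2)) - U * (τ + 2 * γ)) / (2 * γ)

lemma pairRoot_nonneg (hγ : 0 < γ) (hU : 0 ≤ U) (hUC : U ≤ C) : 0 ≤ pairRoot γ τ C U := by
  have : U * (τ + 2 * γ) ≤ √((U * (τ + 2 * γ)) ^ 2 + 4 * γ ^ 2 * (C * U - U ^ 2)) :=
    Real.le_sqrt_of_sq_le (by nlinarith [mul_nonneg hU (sub_nonneg.2 hUC)])
  unfold pairRoot
  exact div_nonneg (by linarith) (by positivity)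

lemma pairRoot_eq (hγ : γ ≠ 0) (hU : 0 ≤ U) (hUC : U ≤ C) :
    γ * C * U = γ * pairRoot γ τ C U ^ 2 + pairRoot γ τ C U * U * (τ + 2 * γ) + γ * U ^ 2 := by
  have hS : √((U * (τ + 2 * γ)) ^ 2 + 4 * γ ^ 2 * (C * U - U ^ 2)) ^ 2
      = (U * (τ + 2 * γ)) ^ 2 + 4 * γ ^ 2 * (C * U - U ^ 2) :=
    Real.sq_sqrt (by nlinarith [mul_nonneg hU (sub_nonneg.2 hUC)])
  unfold pairRoot
  generalize √((U * (τ + 2 * γ)) ^ 2 + 4 * γ ^ 2 * (C * U - U ^ 2)) = S at hS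
  field_simp
  linear_combination -hS

lemma eq_of_mul_sq_add_mul_eq {a b x y : ℝ} (ha : 0 < a) (hb : 0 ≤ b) (hx : 0 ≤ x) (hy : 0 ≤ y)
    (h : a * x ^ 2 + b * x = a * y ^ 2 + b * y) : x = y := by
  have hfac : (x - y) * (a * (x + y) + b) = 0 := by linear_combination h
  rcases mul_eq_zero.1 hfac with hxy | hsum
  · linarith
  · nlinarith

lemma eq_pairRoot (hγ : 0 < γ) (hτ : 0 ≤ τ) (hU : 0 ≤ U) (hUC : U ≤ C) {Z : ℝ} (hZ : 0 ≤ Z)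
    (h : γ * C * U = γ * Z ^ 2 + Z * U * (τ + 2 * γ) + γ * U ^ 2) : Z = pairRoot γ τ C U :=
  eq_of_mul_sq_add_mul_eq (b := U * (τ + 2 * γ)) hγ (by positivity) hZ (pairRoot_nonneg hγ hU hUC)
    (by linear_combination pairRoot_eq (τ := τ) hγ.ne' hU hUC - h)

lemma pairRoot_self (hC : 0 ≤ C) (hγ : 0 < γ) (hτ : 0 ≤ τ) : pairRoot γ τ C C = 0 := by
  have : 0 ≤ C * (τ + 2 * γ) := by positivity
  rw [pairRoot, ← sq, sub_self, mul_zero, add_zero, Real.sqrt_sq this, sub_self, zero_div]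

lemma continuous_pairRoot : Continuous (pairRoot γ τ C) := by
  unfold pairRoot; fun_prop

def pairFraction (γ τ C U : ℝ) : ℝ := pairRoot γ τ C U / (U + pairRoot γ τ C U)

def levelOfFraction (γ τ x : ℝ) : ℝ := (1 - x) ^ 2 / (γ + τ * (x * (1 - x)))

lemma add_pairRoot_pos (hγ : 0 < γ) (hU : 0 < U) (hUC : U ≤ C) : 0 < U + pairRoot γ τ C U := by
  linarith [pairRoot_nonneg (τ := τ) hγ hU.le hUC]

lemma pairFraction_mem_Ico (hγ : 0 < γ) (hU : 0 < U) (hUC : U ≤ C) :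
    pairFraction γ τ C U ∈ Ico 0 1 := by
  have hpos := add_pairRoot_pos (τ := τ) hγ hU hUC
  exact ⟨div_nonneg (pairRoot_nonneg hγ hU.le hUC) hpos.le, (div_lt_one hpos).2 (by linarith)⟩

lemma pairFraction_self (hC : 0 < C) (hγ : 0 < γ) (hτ : 0 ≤ τ) : pairFraction γ τ C C = 0 := by
  rw [pairFraction, pairRoot_self hC.le hγ hτ, zero_div]

lemma continuousOn_pairFraction (hγ : 0 < γ) : ContinuousOn (pairFraction γ τ C) (Ioc 0 C) :=
  continuous_pairRoot.continuousOn.div (continuous_id.add continuous_pairRoot).continuousOn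
    fun _ hU ↦ (add_pairRoot_pos hγ hU.1 hU.2).ne'

lemma add_mul_mul_one_sub_pos {x : ℝ} (hγ : 0 < γ) (hτ : 0 ≤ τ) (hx : x ∈ Icc (0 : ℝ) 1) :
    0 < γ + τ * (x * (1 - x)) := by
  have := mul_nonneg hx.1 (sub_nonneg.2 hx.2); positivity

lemma levelOfFraction_pairFraction (hγ : 0 < γ) (hτ : 0 ≤ τ) (hU : 0 < U) (hUC : U ≤ C) :
    levelOfFraction γ τ (pairFraction γ τ C U) = U / (γ * C) := by
  have hZ := pairRoot_eq (τ := τ) hγ.ne' hU.le hUC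
  have hpos := add_pairRoot_pos (τ := τ) hγ hU hUC
  have hC : 0 < C := hU.trans_le hUC
  rw [levelOfFraction, div_eq_div_iff
    (add_mul_mul_one_sub_pos hγ hτ (Ico_subset_Icc_self (pairFraction_mem_Ico hγ hU hUC))).ne'
    (by positivity), pairFraction]
  generalize pairRoot γ τ C U = Z at hZ hpos
  field_simp
  linear_combination U * hZ

lemma strictAntiOn_levelOfFraction (hγ : 0 < γ) (hτ : 0 ≤ τ) :
    StrictAntiOn (levelOfFraction γ τ) (Icc 0 1) := by
  intro a ha b hb hab
  rw [levelOfFraction, levelOfFraction,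
    div_lt_div_iff₀ (add_mul_mul_one_sub_pos hγ hτ hb) (add_mul_mul_one_sub_pos hγ hτ ha)]
  have hpq : 0 < γ * ((1 - a) - (1 - b)) * ((1 - a) + (1 - b)) := by
    have := hb.2; have := ha.1; apply mul_pos (mul_pos hγ _) _ <;> linarith
  have hcross : 0 ≤ τ * ((1 - a) * (1 - b)) * ((1 - a) * b - (1 - b) * a) := by
    have := hb.2; have := ha.1
    apply mul_nonneg (mul_nonneg hτ (mul_nonneg _ _)) _ <;> nlinarith
  nlinarith

lemma strictAntiOn_pairFraction (hγ : 0 < γ) (hτ : 0 ≤ τ) :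
    StrictAntiOn (pairFraction γ τ C) (Ioc 0 C) := by
  intro U hU V hV hUV
  have hγC : 0 < γ * C := mul_pos hγ (hU.1.trans_le hU.2)
  rw [← (strictAntiOn_levelOfFraction hγ hτ).lt_iff_gt
    (Ico_subset_Icc_self (pairFraction_mem_Ico hγ hU.1 hU.2))
    (Ico_subset_Icc_self (pairFraction_mem_Ico hγ hV.1 hV.2)),
    levelOfFraction_pairFraction hγ hτ hU.1 hU.2, levelOfFraction_pairFraction hγ hτ hV.1 hV.2]
  exact div_lt_div_of_pos_right hUV hγC

lemma tendsto_pairFraction_nhdsGT_zero (hC : 0 < C) (hγ : 0 < γ) (hτ : 0 ≤ τ) :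
    Tendsto (pairFraction γ τ C) (𝓝[>] 0) (𝓝 1) := by
  have hlower : Tendsto (fun U ↦ 1 - √((γ + τ) / (γ * C) * U)) (𝓝[>] 0) (𝓝 1) := by
    have : Continuous fun U : ℝ ↦ 1 - √((γ + τ) / (γ * C) * U) := by fun_prop
    simpa using (this.tendsto 0).mono_left nhdsWithin_le_nhds
  have hIoc : Ioc 0 C ∈ 𝓝[>] (0 : ℝ) := Ioc_mem_nhdsGT hC
  refine tendsto_of_tendsto_of_tendsto_of_le_of_le' hlower tendsto_const_nhds ?_ ?_
  · filter_upwards [hIoc] with U hU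
    obtain ⟨hx0, hx1⟩ := pairFraction_mem_Ico (τ := τ) hγ hU.1 hU.2
    have hlevel := levelOfFraction_pairFraction hγ hτ hU.1 hU.2
    set x := pairFraction γ τ C U
    rw [levelOfFraction, div_eq_div_iff (add_mul_mul_one_sub_pos hγ hτ ⟨hx0, hx1.le⟩).ne'
      (mul_pos hγ hC).ne'] at hlevel
    have hsq : (1 - x) ^ 2 ≤ (γ + τ) / (γ * C) * U := by
      rw [div_mul_eq_mul_div, le_div_iff₀ (mul_pos hγ hC), hlevel]
      have : τ * (x * (1 - x)) ≤ τ := mul_le_of_le_one_right hτ (by nlinarith)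
      nlinarith [hU.1]
    linarith [Real.le_sqrt_of_sq_le hsq]
  · filter_upwards [hIoc] with U hU
    exact (pairFraction_mem_Ico hγ hU.1 hU.2).2.le

lemma pairPrefactor_eq (hγ : 0 < γ) (hU : 0 < U) (hUC : U ≤ C) :
    τ * U / (U + pairRoot γ τ C U) ^ 2 = τ / (γ * C) *
      (γ + τ * (pairFraction γ τ C U * (1 - pairFraction γ τ C U))) := by
  have hZ := pairRoot_eq (τ := τ) hγ.ne' hU.le hUC
  have hpos := add_pairRoot_pos (τ := τ) hγ hU hUC
  have hC : 0 < C := hU.trans_le hUC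
  rw [pairFraction]
  generalize pairRoot γ τ C U = Z at hZ hpos
  field_simp
  linear_combination τ * hZ

def degreeTerm (γ τ D x : ℝ) : ℝ := (γ + τ * (x * (1 - x))) / (γ + τ * D * x)

lemma strictAntiOn_degreeTerm {D : ℝ} (hγ : 0 < γ) (hτ : 0 < τ) (hD : 1 ≤ D) :
    StrictAntiOn (degreeTerm γ τ D) (Ici 0) := by
  intro a (ha : 0 ≤ a) b (hb : 0 ≤ b) hab
  rw [degreeTerm, degreeTerm, div_lt_div_iff₀ (by positivity) (by positivity)]
  have : 0 < (b - a) * (τ * (γ * (D - 1 + (a + b)) + τ * (D * (a * b)))) := by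
    apply mul_pos (by linarith)
    have : 0 < γ * (D - 1 + (a + b)) := mul_pos hγ (by linarith)
    positivity
  linear_combination this

lemma continuousOn_degreeTerm {D : ℝ} (hγ : 0 < γ) (hτ : 0 ≤ τ) (hD : 0 ≤ D) :
    ContinuousOn (degreeTerm γ τ D) (Ici 0) :=
  ContinuousOn.div (by fun_prop) (by fun_prop) fun x (hx : 0 ≤ x) ↦ by positivity

variable {ι : Type*} [Fintype ι] {D c : ι → ℝ}

def degreeSum (γ τ C : ℝ) (D c : ι → ℝ) (x : ℝ) : ℝ :=
  τ / (γ * C) * ∑ i, c i * degreeTerm γ τ (D i) x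

lemma strictAntiOn_degreeSum (hγ : 0 < γ) (hτ : 0 < τ) (hC : 0 < C)
    (hD : ∀ i, 1 ≤ D i) (hc : 0 ≤ c) (hc' : 0 < ∑ i, c i) :
    StrictAntiOn (degreeSum γ τ C D c) (Ici 0) := by
  intro a ha b hb hab
  obtain ⟨j, -, hj⟩ := Finset.exists_lt_of_sum_lt (f := 0) (g := c)
    (s := Finset.univ) (by simpa using hc')
  refine mul_lt_mul_of_pos_left (Finset.sum_lt_sum (fun i _ ↦ ?_) ⟨j, Finset.mem_univ _, ?_⟩)
    (by positivity)
  · exact mul_le_mul_of_nonneg_left ((strictAntiOn_degreeTerm hγ hτ (hD i)).antitoneOn ha hb hab.le)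
      (hc i)
  · exact mul_lt_mul_of_pos_left (strictAntiOn_degreeTerm hγ hτ (hD j) ha hb hab) hj

lemma continuousOn_degreeSum (hγ : 0 < γ) (hτ : 0 ≤ τ) (hD : 0 ≤ D) :
    ContinuousOn (degreeSum γ τ C D c) (Ici 0) :=
  continuousOn_const.mul <| continuousOn_finsetSum _ fun i _ ↦
    continuousOn_const.mul (continuousOn_degreeTerm hγ hτ (hD i))

lemma degreeSum_zero (hγ : 0 < γ) :
    degreeSum γ τ C D c 0 = τ / (γ * C) * ∑ i, c i := by
  simp [degreeSum, degreeTerm, hγ.ne']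

lemma degreeSum_one :
    degreeSum γ τ C D c 1 = τ / (γ * C) * ∑ i, c i * (γ / (γ + τ * D i)) := by
  simp [degreeSum, degreeTerm]

lemma pairPrefactor_mul_sum_eq_degreeSum (hγ : 0 < γ) (hU : 0 < U) (hUC : U ≤ C) :
    τ * U / (U + pairRoot γ τ C U) ^ 2 *
      ∑ i, c i / (γ + τ * D i * (pairRoot γ τ C U / (U + pairRoot γ τ C U))) =
    degreeSum γ τ C D c (pairFraction γ τ C U) := by
  rw [pairPrefactor_eq hγ hU hUC, degreeSum, mul_assoc, Finset.mul_sum]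
  congr 1
  refine Finset.sum_congr rfl fun i _ ↦ ?_
  rw [degreeTerm, pairFraction]
  ring

lemma degreeSum_one_lt_one {m : ι → ℝ} (hγ : 0 < γ) (hτ : 0 < τ) (hD : ∀ i, 1 ≤ D i)
    (hm : 0 ≤ m) (hmpos : 0 < ∑ i, m i) (hC : C = ∑ i, D i * m i) :
    degreeSum γ τ C D (fun i ↦ D i * (D i - 1) * m i) 1 < 1 := by
  have hCpos : 0 < C := hC ▸ hmpos.trans_le (Finset.sum_le_sum fun i _ ↦
    le_mul_of_one_le_left (hm i) (hD i))
  have hterm : ∀ i, D i * (D i - 1) * m i * (γ / (γ + τ * D i)) ≤ γ / τ * ((D i - 1) * m i) := by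
    intro i
    have hDi := hD i
    rw [← mul_div_assoc, div_mul_eq_mul_div, div_le_div_iff₀ (by positivity) hτ]
    have : 0 ≤ γ * ((D i - 1) * m i) := mul_nonneg hγ.le (mul_nonneg (by linarith) (hm i))
    nlinarith
  have hsum : ∑ i, (D i - 1) * m i = C - ∑ i, m i := by
    simp only [sub_one_mul, Finset.sum_sub_distrib, hC]
  calc degreeSum γ τ C D (fun i ↦ D i * (D i - 1) * m i) 1
      ≤ τ / (γ * C) * (γ / τ * (C - ∑ i, m i)) := by
        rw [degreeSum_one, ← hsum, Finset.mul_sum Finset.univ _ (γ / τ)]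
        exact mul_le_mul_of_nonneg_left (Finset.sum_le_sum fun i _ ↦ hterm i) (by positivity)
    _ = (C - ∑ i, m i) / C := by field_simp
    _ < 1 := by rw [div_lt_one hCpos]; linarith

lemma continuousOn_degreeSum_pairFraction (hγ : 0 < γ) (hτ : 0 ≤ τ) (hD : 0 ≤ D) :
    ContinuousOn (fun U ↦ degreeSum γ τ C D c (pairFraction γ τ C U)) (Ioc 0 C) :=
  (continuousOn_degreeSum hγ hτ hD).comp (continuousOn_pairFraction hγ) fun _ hU ↦
    (pairFraction_mem_Ico hγ hU.1 hU.2).1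

lemma strictMonoOn_degreeSum_pairFraction (hγ : 0 < γ) (hτ : 0 < τ) (hC : 0 < C)
    (hD : ∀ i, 1 ≤ D i) (hc : 0 ≤ c) (hc' : 0 < ∑ i, c i) :
    StrictMonoOn (fun U ↦ degreeSum γ τ C D c (pairFraction γ τ C U)) (Ioc 0 C) :=
  (strictAntiOn_degreeSum hγ hτ hC hD hc hc').comp (strictAntiOn_pairFraction hγ hτ.le)
    fun _ hU ↦ (pairFraction_mem_Ico hγ hU.1 hU.2).1

lemma tendsto_degreeSum_pairFraction (hγ : 0 < γ) (hτ : 0 ≤ τ) (hC : 0 < C) (hD : 0 ≤ D) :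
    Tendsto (fun U ↦ degreeSum γ τ C D c (pairFraction γ τ C U)) (𝓝[>] 0)
      (𝓝 (degreeSum γ τ C D c 1)) := by
  have hmaps : Tendsto (pairFraction γ τ C) (𝓝[>] 0) (𝓝[Ici 0] 1) := by
    refine tendsto_nhdsWithin_iff.2 ⟨tendsto_pairFraction_nhdsGT_zero hC hγ hτ, ?_⟩
    filter_upwards [Ioc_mem_nhdsGT hC] with U hU
    exact (pairFraction_mem_Ico hγ hU.1 hU.2).1
  exact ((continuousOn_degreeSum hγ hτ hD) 1 (mem_Ici.2 zero_le_one)).tendsto.comp hmaps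

lemma sum_mul_sub_one_mul_eq {m : ι → ℝ} {N n m2 : ℝ} (hN : N ≠ 0)
    (hn : n = 1 / N * ∑ i, D i * m i) (hm2 : m2 = 1 / N * ∑ i, D i ^ 2 * m i) :
    ∑ i, D i * (D i - 1) * m i = (m2 - n) * N := by
  rw [hn, hm2, ← mul_sub, ← Finset.sum_sub_distrib, one_div_mul_eq_div, div_mul_cancel₀ _ hN]
  exact Finset.sum_congr rfl fun i _ ↦ by ring

lemma one_lt_degreeSum_zero {n N m2 : ℝ} (hγ : 0 < γ) (hn : 0 < n) (hN : 0 < N)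
    (hm2n : n < m2) (hsup : γ * n / (m2 - n) < τ) (hc : ∑ i, c i = (m2 - n) * N) :
    1 < degreeSum γ τ (n * N) D c 0 := by
  rw [div_lt_iff₀ (sub_pos.2 hm2n)] at hsup
  rw [degreeSum_zero hγ, hc,
    show τ / (γ * (n * N)) * ((m2 - n) * N) = τ * (m2 - n) / (γ * n) by field_simp,
    one_lt_div (by positivity)]
  exact hsup

end

end CompactPairwiseSIS

open CompactPairwiseSIS

theorem endemic_equilibrium_exists_unique_general
    (γ τ : ℝ) (hγ : 0 < γ) (hτ : 0 < τ)
    (L : ℕ)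
    (d mlt : Fin L → ℕ)
    (hd : ∀ l, 1 ≤ d l)
    (N n m2 τc : ℝ) (hN : N = ∑ l, (mlt l : ℝ))
    (hn : n = (1 / N) * ∑ l, (d l : ℝ) * (mlt l : ℝ))
    (hm2 : m2 = (1 / N) * ∑ l, (d l : ℝ) ^ 2 * (mlt l : ℝ))
    (hm2n : n < m2)
    (hτc : τc = γ * n / (m2 - n))
    (hsup : τc < τ)
    (g : ℝ → ℝ)
    (hg : ∀ U ∈ Set.Icc (0:ℝ) (n * N),
      0 ≤ g U ∧ γ * n * N * U = γ * (g U) ^ 2 + g U * U * (τ + 2 * γ) + γ * U ^ 2)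
    (f : ℝ → ℝ)
    (hf : ∀ U, f U = (τ * U / (U + g U) ^ 2) *
      ∑ l, (d l : ℝ) * ((d l : ℝ) - 1) * (mlt l : ℝ) /
        (γ + τ * (d l : ℝ) * (g U / (U + g U)))) :
    ContinuousOn f (Set.Ioo 0 (n * N)) ∧
    StrictMonoOn f (Set.Ioo 0 (n * N)) ∧
    (∃ c : ℝ, Filter.Tendsto f (nhdsWithin 0 (Set.Ioi 0)) (nhds c) ∧ c < 1) ∧
    1 < f (n * N) ∧
    (∃! U : ℝ, U ∈ Set.Ioo 0 (n * N) ∧ f U = 1) := by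
  have hN0 : 0 < N := by
    refine (hN ▸ by positivity : 0 ≤ N).lt_of_ne' fun h0 ↦ ?_
    simp only [h0, div_zero, zero_mul] at hn hm2
    linarith
  have hnN : n * N = ∑ l, (d l : ℝ) * mlt l := by rw [hn]; field_simp
  have hcsum := sum_mul_sub_one_mul_eq hN0.ne' hn hm2
  have hD : ∀ l, (1 : ℝ) ≤ d l := fun l ↦ by exact_mod_cast hd l
  have hD0 : 0 ≤ fun l ↦ (d l : ℝ) := fun l ↦ Nat.cast_nonneg _
  have hC : 0 < n * N := hnN ▸ (hN ▸ hN0).trans_le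
    (Finset.sum_le_sum fun l _ ↦ le_mul_of_one_le_left (Nat.cast_nonneg _) (hD l))
  have hfF : EqOn f (fun U ↦ degreeSum γ τ (n * N) (fun l ↦ (d l : ℝ))
      (fun l ↦ (d l : ℝ) * ((d l : ℝ) - 1) * mlt l) (pairFraction γ τ (n * N) U))
      (Ioc 0 (n * N)) := by
    intro U hU
    obtain ⟨hgU, hgeq⟩ := hg U (Ioc_subset_Icc_self hU)
    rw [hf, eq_pairRoot hγ hτ.le hU.1.le hU.2 hgU (by linear_combination hgeq),
      pairPrefactor_mul_sum_eq_degreeSum hγ hU.1 hU.2]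
  have hcrit : 1 < f (n * N) := by
    simp only [hfF ⟨hC, le_rfl⟩, pairFraction_self hC hγ hτ.le]
    exact one_lt_degreeSum_zero hγ (pos_of_mul_pos_left hC hN0.le) hN0 hm2n (hτc ▸ hsup) hcsum
  have hcont := (continuousOn_degreeSum_pairFraction hγ hτ.le hD0).congr hfF
  have hmono := (strictMonoOn_degreeSum_pairFraction hγ hτ hC hD
    (fun l ↦ mul_nonneg (mul_nonneg (by linarith [hD l]) (by linarith [hD l])) (Nat.cast_nonneg _))
    (hcsum ▸ mul_pos (sub_pos.2 hm2n) hN0)).congr hfF.symm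
  have hlim := (tendsto_degreeSum_pairFraction hγ hτ.le hC hD0).congr'
    (eventuallyEq_of_mem (Ioc_mem_nhdsGT hC) hfF).symm
  have hK1 := degreeSum_one_lt_one hγ hτ hD (fun l ↦ Nat.cast_nonneg (mlt l)) (hN ▸ hN0) hnN
  exact ⟨hcont.mono Ioo_subset_Ioc_self, hmono.mono Ioo_subset_Ioc_self, ⟨_, hlim, hK1⟩, hcrit,
    existsUnique_eq_of_strictMonoOn_Ioc hC hcont hmono hlim hK1 hcrit⟩

theorem endemic_equilibrium_exists_unique
    (γ τ : ℝ) (hγ : 0 < γ) (hτ : 0 < τ)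
    (L : ℕ) (hL : 0 < L)
    (d mlt : Fin L → ℕ)
    (hd : ∀ l, 1 ≤ d l) (hmlt : ∀ l, 0 < mlt l)
    (N n m2 τc : ℝ) (hN : N = ∑ l, (mlt l : ℝ))
    (hn : n = (1 / N) * ∑ l, (d l : ℝ) * (mlt l : ℝ))
    (hm2 : m2 = (1 / N) * ∑ l, (d l : ℝ) ^ 2 * (mlt l : ℝ))
    (hm2n : n < m2)
    (hτc : τc = γ * n / (m2 - n))
    (hsup : τc < τ)
    (g : ℝ → ℝ)
    (hg : ∀ U ∈ Set.Icc (0:ℝ) (n * N),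
      0 ≤ g U ∧ γ * n * N * U = γ * (g U) ^ 2 + g U * U * (τ + 2 * γ) + γ * U ^ 2)
    (f : ℝ → ℝ)
    (hf : ∀ U, f U = (τ * U / (U + g U) ^ 2) *
      ∑ l, (d l : ℝ) * ((d l : ℝ) - 1) * (mlt l : ℝ) /
        (γ + τ * (d l : ℝ) * (g U / (U + g U)))) :
    ContinuousOn f (Set.Ioo 0 (n * N)) ∧
    StrictMonoOn f (Set.Ioo 0 (n * N)) ∧
    (∃ c : ℝ, Filter.Tendsto f (nhdsWithin 0 (Set.Ioi 0)) (nhds c) ∧ c < 1) ∧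
    1 < f (n * N) ∧
    (∃! U : ℝ, U ∈ Set.Ioo 0 (n * N) ∧ f U = 1) :=
  endemic_equilibrium_exists_unique_general γ τ hγ hτ L d mlt hd N n m2 τc hN hn hm2 hm2n hτc hsup g
    hg f hf
end

section
/- Let γ, τ > 0 and α = τ(⟨n²⟩−⟨n⟩)/⟨n⟩ − (τ+γ). Both roots of the quadratic λ² + λ(2γ−α) − 2γ(α+τ) have negative real parts if and only if α + τ < 0, i.e. if and only if τ < τ_c = γ⟨n⟩/(⟨n²⟩−⟨n⟩); and if τ > τ_c the quadratic has a positive real root. -/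
/-!
Write the quadratic as `λ² + bλ + c` with `b = 2γ - α` and `c = -2γ(α + τ)`. By the
Routh–Hurwitz criterion in degree two, both roots lie in the open left half-plane exactly when
`b > 0` and `c > 0`; since `γ, τ > 0`, this is equivalent to `α + τ < 0`. Substituting the
definition of `α` turns `α + τ < 0` into `τ < τ_c`, and when `α + τ > 0` the product `c` of the
roots is negative, so one of them is a positive real number.
-/

theorem exists_pos_quadratic_root_of_neg {b c : ℝ} (hc : c < 0) :
    ∃ x : ℝ, 0 < x ∧ x ^ 2 + x * b + c = 0 := by
  have hd : 0 ≤ b ^ 2 - 4 * c := by nlinarith [sq_nonneg b]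
  have hb : b < √(b ^ 2 - 4 * c) := Real.lt_sqrt_of_sq_lt (by linarith)
  refine ⟨(√(b ^ 2 - 4 * c) - b) / 2, by linarith, ?_⟩
  linear_combination Real.sq_sqrt hd / 4

/-- A non-real root has real part `-b / 2`; a real root `x ≥ 0` would make every term positive. -/
theorem Complex.re_neg_of_quadratic_eq_zero {b c : ℝ} (hb : 0 < b) (hc : 0 < c) {z : ℂ}
    (hz : z ^ 2 + z * b + c = 0) : z.re < 0 := by
  have hre : z.re ^ 2 - z.im ^ 2 + z.re * b + c = 0 := by
    simpa [sq] using congrArg Complex.re hz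
  have him : z.im * (2 * z.re + b) = 0 := by
    have := congrArg Complex.im hz
    simp only [sq, add_im, mul_im, ofReal_re, ofReal_im, zero_im] at this
    linear_combination this
  by_contra! hz_re
  rcases mul_eq_zero.mp him with hz_im | hz_re_eq
  · rw [hz_im] at hre
    nlinarith
  · linarith

/-- The two roots `(-b ± s) / 2` have real parts summing to `-b`, so one of them is `≥ 0`. -/
theorem Complex.exists_quadratic_root_re_nonneg_of_nonpos {b : ℝ} (c : ℝ) (hb : b ≤ 0) :
    ∃ z : ℂ, z ^ 2 + z * b + c = 0 ∧ 0 ≤ z.re := by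
  obtain ⟨s, hs⟩ := IsAlgClosed.exists_eq_mul_self ((b : ℂ) ^ 2 - 4 * c)
  rcases le_total 0 s.re with hs_re | hs_re
  · refine ⟨(s - b) / 2, by linear_combination -hs / 4, ?_⟩
    simp only [div_ofNat_re, sub_re, ofReal_re]
    linarith
  · refine ⟨(-s - b) / 2, by linear_combination -hs / 4, ?_⟩
    simp only [div_ofNat_re, sub_re, neg_re, ofReal_re]
    linarith

theorem Complex.forall_quadratic_root_re_neg_iff {b c : ℝ} :
    (∀ z : ℂ, z ^ 2 + z * b + c = 0 → z.re < 0) ↔ 0 < b ∧ 0 < c := by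
  refine ⟨fun h ↦ ⟨?_, ?_⟩, fun ⟨hb, hc⟩ _ ↦ re_neg_of_quadratic_eq_zero hb hc⟩
  · by_contra! hb
    obtain ⟨z, hz, hz_re⟩ := exists_quadratic_root_re_nonneg_of_nonpos c hb
    exact (h z hz).not_ge hz_re
  · by_contra! hc
    rcases hc.lt_or_eq with hc | rfl
    · obtain ⟨x, hx, hroot⟩ := exists_pos_quadratic_root_of_neg (b := b) hc
      have := h x (by exact_mod_cast hroot)
      simp only [ofReal_re] at this
      linarith
    · simpa using h 0 (by simp)

theorem quadratic_stability
    (γ τ m1 m2 α τc : ℝ) (hγ : 0 < γ) (hτ : 0 < τ)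
    (hm1 : 0 < m1) (hm12 : m1 < m2)
    (hα : α = τ * (m2 - m1) / m1 - (τ + γ))
    (hτc : τc = γ * m1 / (m2 - m1)) :
    ((∀ lam : ℂ, lam ^ 2 + lam * (2 * γ - α) - 2 * γ * (α + τ) = 0 → lam.re < 0)
        ↔ α + τ < 0) ∧
    (α + τ < 0 ↔ τ < τc) ∧
    (τc < τ → ∃ lam : ℝ, 0 < lam ∧ lam ^ 2 + lam * (2 * γ - α) - 2 * γ * (α + τ) = 0) := by
  have hm : 0 < m2 - m1 := sub_pos.mpr hm12
  have hsum : α + τ = τ * (m2 - m1) / m1 - γ := by rw [hα]; ring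
  have hcrit : α + τ < 0 ↔ τ < τc := by
    rw [hsum, hτc, sub_neg, div_lt_iff₀ hm1, lt_div_iff₀ hm]
  have hcoeffs : 0 < 2 * γ - α ∧ 0 < -(2 * γ * (α + τ)) ↔ α + τ < 0 := by
    refine ⟨fun h ↦ by nlinarith [h.2], fun h ↦ ⟨by linarith, by nlinarith⟩⟩
  refine ⟨?_, hcrit, fun hlt ↦ ?_⟩
  · rw [← hcoeffs, ← Complex.forall_quadratic_root_re_neg_iff]
    push_cast
    simp only [sub_eq_add_neg]
  · have hpos : 0 < α + τ := by
      rw [hsum, sub_pos, lt_div_iff₀ hm1]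
      rw [hτc, div_lt_iff₀ hm] at hlt
      linarith
    simpa [sub_eq_add_neg] using
      exists_pos_quadratic_root_of_neg (b := 2 * γ - α) (by nlinarith : -(2 * γ * (α + τ)) < 0)
end

section
/- Let n₁, n₂ be positive integers with n₂ > n₁, and N₁, N₂ positive integers, with moments over population N = N₁+N₂: n = (n₁N₁+n₂N₂)/N, ⟨n²⟩ = (n₁²N₁+n₂²N₂)/N. Define V = 2n₁²N₁²(n₁−1)² + 2n₂²N₂²(n₂−1)² + N₁N₂n₁n₂(n₁−2)² + N₁N₂n₁n₂²(3n₁−4). If either n₁ ≥ 2, or (n₁ = 1 and n₂N₂ ≥ N₁), then V ≥ 0. -/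
/-!
For `n₁ ≥ 2` every summand of `V` is nonnegative. For `n₁ = 1` the expression collapses to
`2 P² q² - N₁ P q` with `P = n₂ N₂` and `q = n₂ - 1`; the hypothesis `N₁ ≤ P` bounds the negative
part by `P² q`, leaving `P² q (2q - 1)`, which is nonnegative because no integer lies strictly
between the roots `1` and `3/2` of `(n - 1)(2n - 3)`.
-/

section

variable {R : Type*} [CommRing R]

def bimodalV (n₁ n₂ N₁ N₂ : R) : R :=
  2 * n₁ ^ 2 * N₁ ^ 2 * (n₁ - 1) ^ 2 + 2 * n₂ ^ 2 * N₂ ^ 2 * (n₂ - 1) ^ 2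
    + N₁ * N₂ * n₁ * n₂ * (n₁ - 2) ^ 2 + N₁ * N₂ * n₁ * n₂ ^ 2 * (3 * n₁ - 4)

theorem bimodalV_one (n₂ N₁ N₂ : R) :
    bimodalV 1 n₂ N₁ N₂ = 2 * (n₂ * N₂) ^ 2 * (n₂ - 1) ^ 2 - N₁ * (n₂ * N₂) * (n₂ - 1) := by
  unfold bimodalV
  ring

variable [LinearOrder R] [IsStrictOrderedRing R]

theorem natCast_mul_natCast_sub_one_nonneg (n : ℕ) : 0 ≤ (n : R) * (n - 1) := by
  rcases n with _ | m
  · simp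
  · push_cast
    simpa using mul_nonneg (by positivity : (0 : R) ≤ m + 1) (Nat.cast_nonneg (α := R) m)

theorem natCast_sub_one_mul_two_mul_natCast_sub_three_nonneg (n : ℕ) :
    0 ≤ ((n : R) - 1) * (2 * n - 3) := by
  rcases n with _ | _ | m
  · norm_num
  · norm_num
  · push_cast
    ring_nf
    positivity

theorem bimodalV_nonneg_of_two_le {n₁ n₂ N₁ N₂ : R} (hn₁ : 2 ≤ n₁) (hn₂ : 0 ≤ n₂)
    (hN₁ : 0 ≤ N₁) (hN₂ : 0 ≤ N₂) : 0 ≤ bimodalV n₁ n₂ N₁ N₂ := by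
  have : 0 ≤ 3 * n₁ - 4 := by linarith
  have : 0 ≤ n₁ := by linarith
  unfold bimodalV
  positivity

theorem bimodalV_one_nonneg {n₂ N₁ N₂ : ℕ} (h : N₁ ≤ n₂ * N₂) :
    0 ≤ bimodalV (1 : R) n₂ N₁ N₂ := by
  have hN₁ : (N₁ : R) ≤ n₂ * N₂ := by exact_mod_cast h
  set P : R := n₂ * N₂
  have hPq : 0 ≤ P * (n₂ - 1) := by
    simpa only [P, mul_right_comm] using
      mul_nonneg (natCast_mul_natCast_sub_one_nonneg (R := R) n₂) (Nat.cast_nonneg N₂)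
  rw [bimodalV_one]
  calc (0 : R) ≤ P ^ 2 * (((n₂ : R) - 1) * (2 * n₂ - 3)) :=
        mul_nonneg (sq_nonneg P) (natCast_sub_one_mul_two_mul_natCast_sub_three_nonneg n₂)
    _ = 2 * P ^ 2 * (n₂ - 1) ^ 2 - P * (P * (n₂ - 1)) := by ring
    _ ≤ 2 * P ^ 2 * (n₂ - 1) ^ 2 - N₁ * P * (n₂ - 1) := by
        rw [mul_assoc (N₁ : R)]
        exact sub_le_sub_left (mul_le_mul_of_nonneg_right hN₁ hPq) _

end

theorem V_nonneg_general
    (n₁ n₂ N₁ N₂ : ℕ)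
    (V : ℝ)
    (hV : V = 2 * (n₁:ℝ) ^ 2 * (N₁:ℝ) ^ 2 * ((n₁:ℝ) - 1) ^ 2
      + 2 * (n₂:ℝ) ^ 2 * (N₂:ℝ) ^ 2 * ((n₂:ℝ) - 1) ^ 2
      + (N₁:ℝ) * (N₂:ℝ) * (n₁:ℝ) * (n₂:ℝ) * ((n₁:ℝ) - 2) ^ 2
      + (N₁:ℝ) * (N₂:ℝ) * (n₁:ℝ) * (n₂:ℝ) ^ 2 * (3 * (n₁:ℝ) - 4))
    (hcase : 2 ≤ n₁ ∨ (n₁ = 1 ∧ N₁ ≤ n₂ * N₂)) :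
    0 ≤ V := by
  rw [hV, ← bimodalV]
  rcases hcase with h2 | ⟨rfl, hle⟩
  · exact bimodalV_nonneg_of_two_le (by exact_mod_cast h2) n₂.cast_nonneg N₁.cast_nonneg
      N₂.cast_nonneg
  · simpa only [Nat.cast_one] using bimodalV_one_nonneg (R := ℝ) hle

theorem V_nonneg
    (n₁ n₂ N₁ N₂ : ℕ)
    (hn₁ : 1 ≤ n₁) (hn₁₂ : n₁ < n₂)
    (hN₁ : 0 < N₁) (hN₂ : 0 < N₂)
    (V : ℝ)
    (hV : V = 2 * (n₁:ℝ) ^ 2 * (N₁:ℝ) ^ 2 * ((n₁:ℝ) - 1) ^ 2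
      + 2 * (n₂:ℝ) ^ 2 * (N₂:ℝ) ^ 2 * ((n₂:ℝ) - 1) ^ 2
      + (N₁:ℝ) * (N₂:ℝ) * (n₁:ℝ) * (n₂:ℝ) * ((n₁:ℝ) - 2) ^ 2
      + (N₁:ℝ) * (N₂:ℝ) * (n₁:ℝ) * (n₂:ℝ) ^ 2 * (3 * (n₁:ℝ) - 4))
    (hcase : 2 ≤ n₁ ∨ (n₁ = 1 ∧ N₁ ≤ n₂ * N₂)) :
    0 ≤ V :=
  V_nonneg_general n₁ n₂ N₁ N₂ V hV hcase
end
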